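/- Cartesian-tree matching is substring-consistent: if X ≈ct Y for equal-length strings X and Y, then X[i..j] ≈ct Y[i..j] holds for all 1 ≤ i ≤ j ≤ |X|. -/

import Mathlib

/-- `sub S i j` is the substring `S[i..j]` (1-indexed, inclusive). -/
def sub {α : Type*} (S : List α) (i j : ℕ) : List α :=
  (S.drop (i - 1)).take (j - i + 1)

/-- unlabeled ordered binary trees -/
inductive BT : Type
  | leaf : BT
  | node : BT → BT → BT
deriving DecidableEq

/-- Cartesian tree, computed with a fuel argument (fuel `≥` length suffices). -/
def ctAux {α : Type*} [LinearOrder α] : ℕ → List α → BT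
  | 0, _ => .leaf
  | _, [] => .leaf
  | n + 1, x :: xs =>
    let l := x :: xs
    let i := l.idxOf (xs.foldl min x)   -- leftmost position of the minimum
    .node (ctAux n (l.take i)) (ctAux n (l.drop (i + 1)))

/-- the Cartesian tree `CT(l)` of a string `l`. -/
def ctree {α : Type*} [LinearOrder α] (l : List α) : BT :=
  ctAux l.length l

/-!
The root of `CT(X)` sits at the leftmost minimum `a` of `X`, so `X = L ++ a :: R` with
`CT(X) = node CT(L) CT(R)`; conversely, any split with `a` strictly below `L` and weakly below `R`
is the one the tree is built from. Cutting `X` on the right either stays inside `L` or keeps `a`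
as leftmost minimum and only cuts `R`; cutting on the left either stays inside `R` or keeps `a`
and only cuts `L`. Hence equal Cartesian trees have equal Cartesian trees of all prefixes and of
all suffixes (by induction on the tree), and a substring is a prefix of a suffix.
-/

namespace CartesianTree

variable {α : Type*} [LinearOrder α]

theorem ctAux_congr_fuel {m n : ℕ} {l : List α} (hm : l.length ≤ m) (hn : l.length ≤ n) :
    ctAux m l = ctAux n l := by
  induction m generalizing n l with
  | zero => rw [List.eq_nil_of_length_eq_zero (Nat.le_zero.1 hm)]; cases n <;> rfl
  | succ m ih =>
    rcases l with _ | ⟨x, xs⟩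
    · cases n <;> rfl
    rcases n with _ | n
    · simp at hn
    have hidx : (x :: xs).idxOf (xs.foldl min x) < xs.length + 1 :=
      List.idxOf_lt_length_of_mem (List.min?_mem (List.min?_cons' (x := x)))
    simp only [List.length_cons] at hm hn
    simp only [ctAux]
    congr 1 <;> apply ih <;> simp only [List.length_take, List.length_drop, List.length_cons] <;>
      omega

theorem ctAux_eq_ctree {n : ℕ} {l : List α} (h : l.length ≤ n) : ctAux n l = ctree l :=
  ctAux_congr_fuel h le_rfl

def IsLeftmostMinSplit (L : List α) (a : α) (R : List α) : Prop :=
  (∀ x ∈ L, a < x) ∧ ∀ x ∈ R, a ≤ x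

theorem IsLeftmostMinSplit.take_right {L R : List α} {a : α} (h : IsLeftmostMinSplit L a R)
    (k : ℕ) : IsLeftmostMinSplit L a (R.take k) :=
  ⟨h.1, fun _ hx => h.2 _ (List.mem_of_mem_take hx)⟩

theorem IsLeftmostMinSplit.drop_left {L R : List α} {a : α} (h : IsLeftmostMinSplit L a R)
    (k : ℕ) : IsLeftmostMinSplit (L.drop k) a R :=
  ⟨fun _ hx => h.1 _ (List.mem_of_mem_drop hx), h.2⟩

theorem ctree_append_cons {L R : List α} {a : α} (h : IsLeftmostMinSplit L a R) :
    ctree (L ++ a :: R) = .node (ctree L) (ctree R) := by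
  obtain ⟨x, xs, hx⟩ := List.exists_cons_of_ne_nil (List.append_ne_nil_of_right_ne_nil L
    (List.cons_ne_nil a R))
  have hmin : xs.foldl min x = a := by
    have ha_le : ∀ b ∈ L ++ a :: R, a ≤ b := by
      simp only [List.mem_append, List.mem_cons]
      rintro b (hb | rfl | hb)
      exacts [(h.1 b hb).le, le_rfl, h.2 b hb]
    have hmin? := List.min?_eq_some_iff.2 ⟨List.mem_append_cons_self, ha_le⟩
    rwa [hx, List.min?_cons', Option.some_inj] at hmin?
  have hidx : (L ++ a :: R).idxOf a = L.length := by
    rw [List.idxOf_append_of_notMem (fun ha => lt_irrefl a (h.1 a ha)), List.idxOf_cons_self,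
      Nat.add_zero]
  have hlen : L.length + (R.length + 1) = xs.length + 1 := by
    simpa using congrArg List.length hx
  rw [ctree, hx, List.length_cons, ctAux, ← hx, hmin, hidx, List.take_left,
    List.drop_length_add_append, List.drop_succ_cons, List.drop_zero]
  congr 1 <;> apply ctAux_eq_ctree <;> omega

theorem exists_isLeftmostMinSplit {l : List α} (hl : l ≠ []) :
    ∃ L a R, l = L ++ a :: R ∧ IsLeftmostMinSplit L a R := by
  obtain ⟨a, ha⟩ := Option.ne_none_iff_exists'.1 (List.min?_eq_none_iff.not.2 hl)
  obtain ⟨ha_mem, ha_le⟩ := List.min?_eq_some_iff.1 ha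
  obtain ⟨L, R, rfl, haL⟩ := List.eq_append_cons_of_mem ha_mem
  refine ⟨L, a, R, rfl, fun x hx => lt_of_le_of_ne (ha_le x (by simp [hx])) ?_,
    fun x hx => ha_le x (by simp [hx])⟩
  rintro rfl
  exact haL hx

theorem exists_split_of_ctree_eq_node {X : List α} {tl tr : BT} (h : ctree X = .node tl tr) :
    ∃ L a R, X = L ++ a :: R ∧ IsLeftmostMinSplit L a R ∧ ctree L = tl ∧ ctree R = tr := by
  have hX : X ≠ [] := by rintro rfl; cases h
  obtain ⟨L, a, R, rfl, hs⟩ := exists_isLeftmostMinSplit hX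
  rw [ctree_append_cons hs, BT.node.injEq] at h
  exact ⟨L, a, R, rfl, hs, h⟩

theorem eq_nil_of_ctree_eq_leaf {X : List α} (h : ctree X = .leaf) : X = [] := by
  by_contra hX
  obtain ⟨L, a, R, rfl, hs⟩ := exists_isLeftmostMinSplit hX
  rw [ctree_append_cons hs] at h
  cases h

theorem ctree_eq_induction {motive : List α → List α → Prop} (nil : motive [] [])
    (split : ∀ L a R L' b R', IsLeftmostMinSplit L a R → IsLeftmostMinSplit L' b R' →
      ctree L = ctree L' → ctree R = ctree R' → motive L L' → motive R R' →
      motive (L ++ a :: R) (L' ++ b :: R'))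
    {X Y : List α} (h : ctree X = ctree Y) : motive X Y := by
  obtain ⟨t, hX, hY⟩ : ∃ t, ctree X = t ∧ ctree Y = t := ⟨_, rfl, h.symm⟩
  clear h
  induction t generalizing X Y with
  | leaf => rw [eq_nil_of_ctree_eq_leaf hX, eq_nil_of_ctree_eq_leaf hY]; exact nil
  | node tl tr ihl ihr =>
    obtain ⟨L, a, R, rfl, hs, hL, hR⟩ := exists_split_of_ctree_eq_node hX
    obtain ⟨L', b, R', rfl, hs', hL', hR'⟩ := exists_split_of_ctree_eq_node hY
    exact split L a R L' b R' hs hs' (hL.trans hL'.symm) (hR.trans hR'.symm)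
      (ihl hL hL') (ihr hR hR')

theorem length_eq_of_ctree_eq {X Y : List α} (h : ctree X = ctree Y) :
    X.length = Y.length := by
  refine ctree_eq_induction (motive := fun X Y => X.length = Y.length) rfl ?_ h
  intro L a R L' b R' _ _ _ _ hL hR
  simp only [List.length_append, List.length_cons, hL, hR]

theorem ctree_take_eq_of_ctree_eq {X Y : List α} (h : ctree X = ctree Y) (k : ℕ) :
    ctree (X.take k) = ctree (Y.take k) := by
  revert k
  refine ctree_eq_induction (motive := fun X Y => ∀ k, ctree (X.take k) = ctree (Y.take k))
    (fun _ => rfl) ?_ h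
  intro L a R L' b R' hs hs' hL hR ihL ihR k
  have hlen : L.length = L'.length := length_eq_of_ctree_eq hL
  rcases le_or_gt k L.length with hk | hk
  · rw [List.take_append_of_le_length hk, List.take_append_of_le_length (hlen ▸ hk)]
    exact ihL k
  · obtain ⟨d, rfl⟩ := Nat.exists_eq_add_of_lt hk
    rw [Nat.add_assoc, List.take_length_add_append, hlen, List.take_length_add_append,
      List.take_succ_cons, List.take_succ_cons, ctree_append_cons (hs.take_right d),
      ctree_append_cons (hs'.take_right d), hL, ihR d]

theorem ctree_drop_eq_of_ctree_eq {X Y : List α} (h : ctree X = ctree Y) (k : ℕ) :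
    ctree (X.drop k) = ctree (Y.drop k) := by
  revert k
  refine ctree_eq_induction (motive := fun X Y => ∀ k, ctree (X.drop k) = ctree (Y.drop k))
    (fun _ => rfl) ?_ h
  intro L a R L' b R' hs hs' hL hR ihL ihR k
  have hlen : L.length = L'.length := length_eq_of_ctree_eq hL
  rcases le_or_gt k L.length with hk | hk
  · rw [List.drop_append_of_le_length hk, List.drop_append_of_le_length (hlen ▸ hk),
      ctree_append_cons (hs.drop_left k), ctree_append_cons (hs'.drop_left k), hR, ihL k]
  · obtain ⟨d, rfl⟩ := Nat.exists_eq_add_of_lt hk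
    rw [Nat.add_assoc, List.drop_length_add_append, hlen, List.drop_length_add_append,
      List.drop_succ_cons, List.drop_succ_cons]
    exact ihR d

end CartesianTree

theorem stmt9_general {α : Type*} [LinearOrder α] (X Y : List α)
    (hct : ctree X = ctree Y)
    (i j : ℕ) :
    ctree (sub X i j) = ctree (sub Y i j) :=
  CartesianTree.ctree_take_eq_of_ctree_eq (CartesianTree.ctree_drop_eq_of_ctree_eq hct _) _

theorem stmt9 {α : Type*} [LinearOrder α] (X Y : List α)
    (hlen : X.length = Y.length) (hct : ctree X = ctree Y)
    (i j : ℕ) (h1 : 1 ≤ i) (hij : i ≤ j) (hj : j ≤ X.length) :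
    ctree (sub X i j) = ctree (sub Y i j) :=
  stmt9_general X Y hct i j
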